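/- Let M₁, M₂, N₁, N₂ be positive integers with N := N₁·N₂ = M₁·M₂, let F be the quantum Fourier transform matrix F (j,k) (l,m) = exp(2πi·(j·N₂ + k)·(l·M₂ + m)/N)/√N, and let F^R be its realignment. Then F is maximally entangled — that is, all nonzero singular values of F^R are equal, equivalently there exists c > 0 with F^R * (F^R)ᴴ * F^R = (c : ℂ) • F^R — if and only if (M₁ ∣ N₂ or N₂ < M₁) and (N₁ ∣ M₂ or M₂ < N₁). -/

import Mathlib

open Matrix Complex

/-- The quantum Fourier transform `𝓕_{M₁M₂ → N₁N₂}` as a matrix, with `N = N₁N₂ = M₁M₂`. -/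
noncomputable def QFT (M₁ M₂ N₁ N₂ : ℕ) : Matrix (Fin N₁ × Fin N₂) (Fin M₁ × Fin M₂) ℂ :=
  fun p q => Complex.exp (2 * Real.pi * Complex.I *
      (((p.1.val : ℂ) * N₂ + p.2.val) * ((q.1.val : ℂ) * M₂ + q.2.val)) / (N₁ * N₂)) /
    Real.sqrt (N₁ * N₂)

/-- The realignment `M^R (i,k) (j,l) = M (i,j) (k,l)`. -/
def realign {I J K L : Type*} (M : Matrix (I × J) (K × L) ℂ) : Matrix (I × K) (J × L) ℂ :=
  fun p q => M (p.1, q.1) (p.2, q.2)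

/-!
Write `ω = exp (2πi / N)`. Expanding `(jN₂ + k)(lM₂ + m)`, the entry `((j,l),(k,m))` of `F^R` is
`ω^(jlN₂M₂) · ζ₁^(jm) · ζ₂^(lk) · ω^(km) / √N`, where `ζ₁ = ω^N₂` and `ζ₂ = ω^M₂` are primitive
roots of unity of orders `N₁` and `M₁`. So, up to unimodular diagonal factors on both sides, a
permutation of the columns and a scalar, `F^R` is the Kronecker product of the rectangular Fourier
blocks `A = (ζ₁^(jm))` (`N₁ × M₂`) and `B = (ζ₂^(lk))` (`M₁ × N₂`), and an identity
`X Xᴴ X = X · diag d` survives each of these operations. Orthogonality of characters gives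
`A Aᴴ A = A · diag(N₁ · #{m' < M₂ | m' ≡ m mod N₁})`, and similarly for `B`. Hence
`F^R (F^R)ᴴ F^R = F^R · D` for a positive diagonal `D`, which is constant iff every residue class
mod `N₁` meets `[0, M₂)` equally often and every residue class mod `M₁` meets `[0, N₂)` equally
often, that is, iff `N₁ ∣ M₂ ∨ M₂ < N₁` and `M₁ ∣ N₂ ∨ N₂ < M₁`.
-/

open Finset
open scoped Kronecker

theorem geom_sum_of_pow_eq_one {K : Type*} [DivisionRing K] [DecidableEq K] {z : K} {n : ℕ}
    (hz : z ^ n = 1) : ∑ i ∈ range n, z ^ i = if z = 1 then (n : K) else 0 := by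
  split_ifs with h
  · simp [h]
  · rw [geom_sum_eq h, hz, sub_self, zero_div]

theorem IsPrimitiveRoot.pow_eq_pow_of_modEq {M : Type*} [CommMonoid M] {ζ : M} {n a b : ℕ}
    (hζ : IsPrimitiveRoot ζ n) (h : a ≡ b [MOD n]) : ζ ^ a = ζ ^ b := by
  rw [← pow_mod_orderOf, ← hζ.eq_orderOf, h, hζ.eq_orderOf, pow_mod_orderOf]

def residueCount (n b m : ℕ) : ℕ := b.count (· ≡ m [MOD n])

theorem residueCount_ne_zero {n b m : ℕ} (hm : m < b) : residueCount n b m ≠ 0 :=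
  Nat.count_ne_iff_exists.mpr ⟨m, hm, Nat.ModEq.refl _⟩

theorem forall_residueCount_eq_iff {n b : ℕ} (hn : 0 < n) :
    (∀ m m' : Fin b, residueCount n b m = residueCount n b m') ↔ n ∣ b ∨ b < n := by
  simp only [residueCount, Nat.count_modEq_card _ hn]
  constructor
  · intro h
    by_contra! hc
    obtain ⟨hnb, hle⟩ := hc
    have hr : 0 < b % n := Nat.pos_of_ne_zero fun h0 => hnb (Nat.dvd_of_mod_eq_zero h0)
    have := h ⟨b % n, (Nat.mod_lt b hn).trans_le hle⟩ ⟨0, hn.trans_le hle⟩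
    simp [hr] at this
  · rintro (h | h) m m'
    · simp [Nat.mod_eq_zero_of_dvd h]
    · simp [Nat.mod_eq_of_lt h, Nat.mod_eq_of_lt (m.2.trans h), Nat.mod_eq_of_lt (m'.2.trans h)]

theorem forall_mul_eq_mul_iff {M α β : Type*} [MonoidWithZero M] [IsCancelMulZero M]
    [Nonempty α] [Nonempty β] {f : α → M} {g : β → M} (hf : ∀ a, f a ≠ 0) (hg : ∀ b, g b ≠ 0) :
    (∀ p p' : α × β, f p.1 * g p.2 = f p'.1 * g p'.2) ↔
      (∀ a a', f a = f a') ∧ (∀ b b', g b = g b') := by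
  obtain ⟨a₀⟩ := ‹Nonempty α›
  obtain ⟨b₀⟩ := ‹Nonempty β›
  refine ⟨fun h => ⟨fun a a' => ?_, fun b b' => ?_⟩, fun ⟨hf', hg'⟩ p p' => ?_⟩
  · exact mul_right_cancel₀ (hg b₀) (h (a, b₀) (a', b₀))
  · exact mul_left_cancel₀ (hf a₀) (h (a₀, b) (a₀, b'))
  · rw [hf' p.1 p'.1, hg' p.2 p'.2]

theorem exists_pos_forall_mul_natCast_eq_iff {α : Type*} [Nonempty α] {t : ℝ} (ht : 0 < t)
    {f : α → ℕ} (hf : ∀ a, f a ≠ 0) :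
    (∃ c : ℝ, 0 < c ∧ ∀ a, t * f a = c) ↔ ∀ a a', f a = f a' := by
  obtain ⟨a₀⟩ := ‹Nonempty α›
  refine ⟨fun ⟨c, _, h⟩ a a' => ?_, fun h => ⟨t * f a₀, ?_, fun a => by rw [h a a₀]⟩⟩
  · exact_mod_cast mul_left_cancel₀ ht.ne' ((h a).trans (h a').symm)
  · have := Nat.pos_of_ne_zero (hf a₀)
    positivity

section MatrixIdentities

variable {R : Type*} {l m n p : Type*} [Fintype m]

theorem mul_diagonal_eq_smul_iff [CommRing R] [NoZeroDivisors R] [DecidableEq m] [Nonempty l]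
    {X : Matrix l m R} (hX : ∀ i j, X i j ≠ 0) (d : m → R) (c : R) :
    X * diagonal d = c • X ↔ ∀ j, d j = c := by
  obtain ⟨i⟩ := ‹Nonempty l›
  refine ⟨fun h j => ?_, fun h => ?_⟩
  · have hij := congrFun (congrFun h i) j
    rw [mul_diagonal, Matrix.smul_apply, smul_eq_mul, mul_comm] at hij
    exact mul_right_cancel₀ (hX i j) hij
  · ext i j
    rw [mul_diagonal, Matrix.smul_apply, smul_eq_mul, h, mul_comm]

theorem kronecker_mul_conjTranspose_mul_eq_mul_diagonal [Fintype l] [Fintype n] [Fintype p]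
    [CommSemiring R] [StarRing R] [DecidableEq m] [DecidableEq p]
    {A : Matrix l m R} {B : Matrix n p R} {a : m → R} {b : p → R}
    (hA : A * Aᴴ * A = A * diagonal a) (hB : B * Bᴴ * B = B * diagonal b) :
    A ⊗ₖ B * (A ⊗ₖ B)ᴴ * (A ⊗ₖ B) = A ⊗ₖ B * diagonal fun q => a q.1 * b q.2 := by
  rw [conjTranspose_kronecker, ← mul_kronecker_mul, ← mul_kronecker_mul, hA, hB,
    mul_kronecker_mul, diagonal_kronecker_diagonal]
  rfl

theorem submatrix_mul_conjTranspose_mul_eq_mul_diagonal [Fintype l] [Semiring R] [StarRing R]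
    [DecidableEq m] {l' m' : Type*} [Fintype l'] [Fintype m'] [DecidableEq m']
    {X : Matrix l m R} {d : m → R} (hX : X * Xᴴ * X = X * diagonal d) (e₁ : l' ≃ l) (e₂ : m' ≃ m) :
    X.submatrix e₁ e₂ * (X.submatrix e₁ e₂)ᴴ * X.submatrix e₁ e₂ =
      X.submatrix e₁ e₂ * diagonal (d ∘ e₂) := by
  rw [conjTranspose_submatrix, submatrix_mul_equiv, submatrix_mul_equiv, hX,
    ← submatrix_diagonal_equiv, submatrix_mul_equiv]

theorem mul_mul_mul_conjTranspose_mul_of_mem_unitary [Fintype l] [DecidableEq l] [DecidableEq m]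
    [CommRing R] [StarRing R] {U : Matrix l l R} {V : Matrix m m R}
    (hU : U ∈ unitary (Matrix l l R)) (hV : V ∈ unitary (Matrix m m R)) (X : Matrix l m R) :
    U * X * V * (U * X * V)ᴴ * (U * X * V) = U * (X * Xᴴ * X) * V := by
  have hU' : Uᴴ * U = 1 := Unitary.star_mul_self_of_mem hU
  have hV' : V * Vᴴ = 1 := Unitary.mul_star_self_of_mem hV
  simp only [conjTranspose_mul, Matrix.mul_assoc]
  rw [← Matrix.mul_assoc V, hV', Matrix.one_mul, ← Matrix.mul_assoc Uᴴ, hU', Matrix.one_mul]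

theorem diagonal_mem_unitary [Fintype l] [DecidableEq l] {r : l → ℂ} (hr : ∀ i, ‖r i‖ = 1) :
    diagonal r ∈ unitary (Matrix l l ℂ) := by
  rw [Unitary.mem_iff, star_eq_conjTranspose, diagonal_conjTranspose, diagonal_mul_diagonal,
    diagonal_mul_diagonal, ← diagonal_one]
  constructor <;> congr 1 <;> funext i <;> simp [Complex.conj_mul', Complex.mul_conj', hr i]

theorem smul_mul_conjTranspose_mul [Fintype l] (X : Matrix l m ℂ) (s : ℝ) :
    s • X * (s • X)ᴴ * (s • X) = (s ^ 3) • (X * Xᴴ * X) := by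
  simp only [conjTranspose_smul, star_trivial, Matrix.smul_mul, Matrix.mul_smul, smul_smul]
  rw [← pow_two, ← pow_succ']

theorem smul_diagonal_mul_mul_diagonal_mul_conjTranspose_mul [Fintype l] [DecidableEq l]
    [DecidableEq m] {X : Matrix l m ℂ} {d : m → ℂ} (hX : X * Xᴴ * X = X * diagonal d) (s : ℝ)
    {r : l → ℂ} {v : m → ℂ} (hr : ∀ i, ‖r i‖ = 1) (hv : ∀ j, ‖v j‖ = 1) :
    s • (diagonal r * X * diagonal v) * (s • (diagonal r * X * diagonal v))ᴴ *
        (s • (diagonal r * X * diagonal v)) =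
      s • (diagonal r * X * diagonal v) * diagonal fun j => (s ^ 2 : ℝ) * d j := by
  have hcomm : diagonal d * diagonal v = diagonal v * diagonal d := by
    simp only [diagonal_mul_diagonal, mul_comm]
  have hdiag : (diagonal fun j => ((s ^ 2 : ℝ) : ℂ) * d j) = (s ^ 2) • diagonal d := by
    ext i j
    simp [diagonal_apply]
  rw [smul_mul_conjTranspose_mul, mul_mul_mul_conjTranspose_mul_of_mem_unitary
    (diagonal_mem_unitary hr) (diagonal_mem_unitary hv), hX, hdiag, Matrix.smul_mul,
    Matrix.mul_smul, smul_smul, Matrix.mul_assoc _ (diagonal v), ← hcomm, ← Matrix.mul_assoc,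
    ← Matrix.mul_assoc, ← pow_succ']

end MatrixIdentities

section FourierBlock

def fourierBlock (ζ : ℂ) (n b : ℕ) : Matrix (Fin n) (Fin b) ℂ :=
  of fun j m => ζ ^ ((j : ℕ) * m)

variable {ζ : ℂ} {n : ℕ}

theorem fourierBlock_conjTranspose_mul_self (hζ : IsPrimitiveRoot ζ n) (b : ℕ) :
    (fourierBlock ζ n b)ᴴ * fourierBlock ζ n b =
      of fun m m' : Fin b => if (m : ℕ) ≡ m' [MOD n] then (n : ℂ) else 0 := by
  rcases Nat.eq_zero_or_pos n with rfl | hn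
  · ext; simp
  have hζ0 : ζ ≠ 0 := hζ.ne_zero hn.ne'
  have hstar : star ζ = ζ⁻¹ := (RCLike.inv_eq_conj (hζ.norm'_eq_one hn.ne')).symm
  ext m m'
  set z := ζ ^ ((m' : ℤ) - m)
  have hz : z ^ n = 1 := by
    rw [← zpow_natCast, ← _root_.zpow_mul, mul_comm, _root_.zpow_mul, zpow_natCast,
      hζ.pow_eq_one, _root_.one_zpow]
  have hterm : ∀ j : ℕ, ζ⁻¹ ^ (j * (m : ℕ)) * ζ ^ (j * (m' : ℕ)) = z ^ j := by
    intro j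
    rw [← zpow_natCast, ← zpow_natCast, ← zpow_natCast, _root_.inv_zpow', ← zpow_add₀ hζ0,
      ← _root_.zpow_mul]
    congr 1
    push_cast
    ring
  simp only [mul_apply, conjTranspose_apply, fourierBlock, of_apply, star_pow, hstar]
  rw [Fin.sum_univ_eq_sum_range (fun j => ζ⁻¹ ^ (j * (m : ℕ)) * ζ ^ (j * (m' : ℕ))),
    sum_congr rfl fun j _ => hterm j, geom_sum_of_pow_eq_one hz]
  simp only [z, hζ.zpow_eq_one_iff_dvd, Nat.modEq_iff_dvd]

theorem fourierBlock_mul_conjTranspose_mul (hζ : IsPrimitiveRoot ζ n) (b : ℕ) :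
    fourierBlock ζ n b * (fourierBlock ζ n b)ᴴ * fourierBlock ζ n b =
      fourierBlock ζ n b * diagonal fun m : Fin b => (n * residueCount n b m : ℂ) := by
  ext j m
  rw [Matrix.mul_assoc, fourierBlock_conjTranspose_mul_self hζ, mul_diagonal]
  have hterm : ∀ m' : Fin b,
      fourierBlock ζ n b j m' * (if (m' : ℕ) ≡ m [MOD n] then (n : ℂ) else 0) =
        if (m' : ℕ) ≡ m [MOD n] then fourierBlock ζ n b j m * n else 0 := by
    intro m'
    split_ifs with h
    · simp only [fourierBlock, of_apply]
      rw [hζ.pow_eq_pow_of_modEq (h.mul_left _)]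
    · rw [mul_zero]
  simp only [mul_apply, of_apply, hterm]
  rw [Fin.sum_univ_eq_sum_range
      (fun m' => if m' ≡ m [MOD n] then fourierBlock ζ n b j m * n else 0),
    sum_ite, sum_const_zero, add_zero, sum_const, nsmul_eq_mul, residueCount,
    Nat.count_eq_card_filter_range]
  ring

end FourierBlock

noncomputable def qftRoot (N₁ N₂ : ℕ) : ℂ := exp (2 * Real.pi * I / (N₁ * N₂))

section QFT

variable {M₁ M₂ N₁ N₂ : ℕ}

theorem isPrimitiveRoot_qftRoot (h : N₁ * N₂ ≠ 0) :
    IsPrimitiveRoot (qftRoot N₁ N₂) (N₁ * N₂) := by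
  simpa [qftRoot] using Complex.isPrimitiveRoot_exp (N₁ * N₂) h

theorem realign_QFT_eq :
    realign (QFT M₁ M₂ N₁ N₂) = (Real.sqrt (N₁ * N₂))⁻¹ •
      (diagonal (fun p : Fin N₁ × Fin M₁ => qftRoot N₁ N₂ ^ ((p.1 : ℕ) * p.2 * N₂ * M₂)) *
        (fourierBlock (qftRoot N₁ N₂ ^ N₂) N₁ M₂ ⊗ₖ
          fourierBlock (qftRoot N₁ N₂ ^ M₂) M₁ N₂).submatrix (Equiv.refl _)
            (Equiv.prodComm _ _) *
        diagonal (fun p : Fin N₂ × Fin M₂ => qftRoot N₁ N₂ ^ ((p.1 : ℕ) * p.2))) := by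
  ext ⟨j, l⟩ ⟨k, m⟩
  have hpow : ∀ e : ℕ, qftRoot N₁ N₂ ^ e = exp (2 * Real.pi * I * e / (N₁ * N₂)) := by
    intro e
    rw [qftRoot, ← exp_nat_mul]
    congr 1
    ring
  simp only [realign, QFT, Matrix.smul_apply, diagonal_mul, mul_diagonal, submatrix_apply,
    kroneckerMap_apply, Prod.swap_prod_mk, fourierBlock, of_apply, Equiv.refl_apply,
    Equiv.prodComm_apply, Complex.real_smul]
  rw [← pow_mul, ← pow_mul, ← pow_add, ← pow_add, ← pow_add, hpow, div_eq_inv_mul, ofReal_inv]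
  congr 3
  push_cast
  ring

theorem realign_QFT_apply_ne_zero (p : Fin N₁ × Fin M₁) (q : Fin N₂ × Fin M₂) :
    realign (QFT M₁ M₂ N₁ N₂) p q ≠ 0 := by
  have := p.1.pos
  have := q.1.pos
  refine div_ne_zero (exp_ne_zero _) (ofReal_ne_zero.mpr ?_)
  positivity

theorem realign_QFT_mul_conjTranspose_mul (hN₁ : 0 < N₁) (hN₂ : 0 < N₂)
    (hN : N₁ * N₂ = M₁ * M₂) :
    realign (QFT M₁ M₂ N₁ N₂) * (realign (QFT M₁ M₂ N₁ N₂))ᴴ * realign (QFT M₁ M₂ N₁ N₂) =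
      realign (QFT M₁ M₂ N₁ N₂) * diagonal fun p : Fin N₂ × Fin M₂ =>
        (((M₁ : ℝ) / N₂ *
          (residueCount M₁ N₂ p.1 * residueCount N₁ M₂ p.2 : ℕ) : ℝ) : ℂ) := by
  have hω := isPrimitiveRoot_qftRoot (N₁ := N₁) (N₂ := N₂) (by positivity)
  have hunit : ∀ e : ℕ, ‖qftRoot N₁ N₂ ^ e‖ = 1 := fun e => by
    rw [norm_pow, hω.norm'_eq_one (by positivity), one_pow]
  have hK := kronecker_mul_conjTranspose_mul_eq_mul_diagonal
    (fourierBlock_mul_conjTranspose_mul (hω.pow (by positivity) (mul_comm N₁ N₂)) M₂)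
    (fourierBlock_mul_conjTranspose_mul
      (hω.pow (by positivity) (hN.trans (mul_comm M₁ M₂))) N₂)
  rw [realign_QFT_eq, smul_diagonal_mul_mul_diagonal_mul_conjTranspose_mul
    (submatrix_mul_conjTranspose_mul_eq_mul_diagonal hK _ _) _
    (fun _ => hunit _) (fun _ => hunit _)]
  congr 2
  funext p
  rw [inv_pow, Real.sq_sqrt (by positivity)]
  simp only [Function.comp_apply, Equiv.prodComm_apply, Prod.fst_swap, Prod.snd_swap]
  have : (N₁ : ℂ) ≠ 0 := by exact_mod_cast hN₁.ne'
  push_cast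
  field_simp

end QFT

/-- The quantum Fourier transform is maximally entangled (all nonzero singular values of
its realignment equal) iff `(M₁ ∣ N₂ or N₂ < M₁)` and `(N₁ ∣ M₂ or M₂ < N₁)`. -/
theorem stmt_15 (M₁ M₂ N₁ N₂ : ℕ) (hM₁ : 0 < M₁) (hM₂ : 0 < M₂) (hN₁ : 0 < N₁)
    (hN₂ : 0 < N₂) (hN : N₁ * N₂ = M₁ * M₂) :
    (∃ c : ℝ, 0 < c ∧
        realign (QFT M₁ M₂ N₁ N₂) * (realign (QFT M₁ M₂ N₁ N₂))ᴴ *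
            realign (QFT M₁ M₂ N₁ N₂) =
          (c : ℂ) • realign (QFT M₁ M₂ N₁ N₂)) ↔
      ((M₁ ∣ N₂ ∨ N₂ < M₁) ∧ (N₁ ∣ M₂ ∨ M₂ < N₁)) := by
  have : Nonempty (Fin N₁ × Fin M₁) := ⟨(⟨0, hN₁⟩, ⟨0, hM₁⟩)⟩
  have : Nonempty (Fin N₂) := ⟨⟨0, hN₂⟩⟩
  have : Nonempty (Fin M₂) := ⟨⟨0, hM₂⟩⟩
  have hcount {n b : ℕ} (m : Fin b) : residueCount n b m ≠ 0 := residueCount_ne_zero m.2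
  simp only [realign_QFT_mul_conjTranspose_mul hN₁ hN₂ hN,
    mul_diagonal_eq_smul_iff realign_QFT_apply_ne_zero, ofReal_inj]
  refine (exists_pos_forall_mul_natCast_eq_iff (by positivity)
    fun p : Fin N₂ × Fin M₂ => mul_ne_zero (hcount p.1) (hcount p.2)).trans ?_
  refine (forall_mul_eq_mul_iff hcount hcount).trans ?_
  rw [forall_residueCount_eq_iff hM₁, forall_residueCount_eq_iff hN₁]
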